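/- arXiv:2103.16467 — 2 statements merged into one kernel-verified Lean document; each statement's English description precedes it below -/
import Mathlib

section
/- Let p be a prime and α, β ≥ 1, and set δ := β·p^α - (β-1)·p^{α-1} - 1. Then p^β does not divide ĉ_{δ,α} := ∑ (-1)^i C(δ, i), where the sum is over all i ∈ {0,…,δ} with i ≡ δ (mod p^α). -/
/-!
Write `m = p^α`, `q = p^(α-1)`, and let `y = 1 - x` and `N = ∑_{i<m} x^i` in the group ring
`ℤ[ℤ/m]` generated by `x`; then `ĉ_{δ,α}` is the coefficient of `x^δ` in `y^δ`, while every
coefficient of `N` is `1`. Frobenius modulo `p`, refined modulo `p²` by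
`(1 - X)^p + p(1 - X) ≡ 1 - X^p (mod p(1 - X)²)`, gives in `ℤ[X]`
`(1 - X)^(m-1) ≡ N - p(1 - X)^(q-1) (mod p(1 - X)^(2q-1), p²)`.
As `yN = 0` in the group ring, the ideal `K = (y^q, p)` and `u = y^(m-q)` satisfy `uK ⊆ pK` and
`y^(m-1)(u + p) ∈ p²K`, so by induction
`y^(m-1) u^j ≡ (-p)^j y^(m-1) ≡ (-p)^j N (mod p^(j+1))`.
For `δ = (m - 1) + (β - 1)(m - q)` this says `ĉ_{δ,α} ≡ (-p)^(β-1) (mod p^β)`.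
-/

/-- `ĉ_{δ,α} = ∑ (-1)^i C(δ,i)`, summed over `i ∈ {0,…,δ}` with `i ≡ δ (mod p^α)`. -/
def cHat (p α δ : ℕ) : ℤ :=
  ∑ i ∈ Finset.range (δ + 1),
    if i % p ^ α = δ % p ^ α then (-1 : ℤ) ^ i * (δ.choose i : ℤ) else 0

open Finset

namespace Polynomial

theorem natCast_dvd_iff_map_eq_zero (n : ℕ) (f : ℤ[X]) :
    (n : ℤ[X]) ∣ f ↔ f.map (Int.castRingHom (ZMod n)) = 0 := by
  rw [← map_natCast C, C_dvd_iff_dvd_coeff, Polynomial.ext_iff]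
  simp only [coeff_map, coeff_zero, eq_intCast, ZMod.intCast_zmod_eq_zero_iff_dvd]

theorem natCast_dvd_of_dvd_one_sub_X_pow_mul {n k : ℕ} {f : ℤ[X]}
    (h : (n : ℤ[X]) ∣ (1 - X) ^ k * f) : (n : ℤ[X]) ∣ f := by
  replace h : (n : ℤ[X]) ∣ (X - C 1) ^ k * f := by
    rw [C_1, ← neg_sub, neg_pow, mul_assoc]
    exact h.mul_left _
  rw [natCast_dvd_iff_map_eq_zero, Polynomial.map_mul, Polynomial.map_pow, Polynomial.map_sub,
    map_X, map_C, ((monic_X_sub_C _).pow k).mul_right_eq_zero_iff] at h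
  rwa [natCast_dvd_iff_map_eq_zero]

theorem natCast_dvd_one_sub_X_pow_sub {p : ℕ} (hp : p.Prime) (s : ℕ) :
    (p : ℤ[X]) ∣ (1 - X) ^ p ^ s - (1 - X ^ p ^ s) := by
  have := Fact.mk hp
  rw [natCast_dvd_iff_map_eq_zero]
  simp [sub_pow_char_pow]

theorem sq_X_sub_C_dvd {R : Type*} [CommRing R] {f : R[X]} {a : R} (h₀ : f.IsRoot a)
    (h₁ : f.derivative.IsRoot a) : (X - C a) ^ 2 ∣ f := by
  rcases eq_or_ne f 0 with rfl | hf
  · exact dvd_zero _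
  · exact (le_rootMultiplicity_iff hf).mp
      ((one_lt_rootMultiplicity_iff_isRoot hf).mpr ⟨h₀, h₁⟩)

theorem natCast_mul_one_sub_X_sq_dvd {p : ℕ} (hp : p.Prime) :
    (p : ℤ[X]) * (1 - X) ^ 2 ∣ (1 - X) ^ p + (p : ℤ[X]) * (1 - X) - (1 - X ^ p) := by
  set f : ℤ[X] := (1 - X) ^ p + (p : ℤ[X]) * (1 - X) - (1 - X ^ p)
  have hp1 : p - 1 ≠ 0 := by have := hp.two_le; omega
  obtain ⟨g, hg⟩ : (X - C 1) ^ 2 ∣ f := by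
    refine sq_X_sub_C_dvd ?_ ?_ <;> simp [f, derivative_pow, zero_pow hp.ne_zero, zero_pow hp1]
  have hfg : f = (1 - X) ^ 2 * g := by rw [hg, ← neg_sub, neg_sq, C_1]
  have hpf : (p : ℤ[X]) ∣ f := by
    have := natCast_dvd_one_sub_X_pow_sub hp 1
    rw [pow_one] at this
    simpa [f, add_sub_right_comm] using dvd_add this (dvd_mul_right (p : ℤ[X]) (1 - X))
  rw [hfg, mul_comm]
  exact mul_dvd_mul_left _ (natCast_dvd_of_dvd_one_sub_X_pow_mul (hfg ▸ hpf))

theorem exists_one_sub_X_pow_pred_eq {p : ℕ} (hp : p.Prime) (s : ℕ) :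
    ∃ G H : ℤ[X], (1 - X) ^ (p ^ (s + 1) - 1) = ∑ i ∈ range (p ^ (s + 1)), (X : ℤ[X]) ^ i
      - (p : ℤ[X]) * (1 - X) ^ (p ^ s - 1) + (p : ℤ[X]) * (1 - X) ^ (2 * p ^ s - 1) * G
      + (p : ℤ[X]) ^ 2 * H := by
  set q := p ^ s
  have hq : q ≠ 0 := pow_ne_zero s hp.ne_zero
  obtain ⟨G, hG⟩ := _root_.map_dvd (expand ℤ q) (natCast_mul_one_sub_X_sq_dvd hp)
  simp only [map_sub, map_add, map_mul, map_pow, map_one, map_natCast, expand_X, ← pow_mul] at hG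
  rw [← pow_succ] at hG
  obtain ⟨a, ha⟩ := natCast_dvd_one_sub_X_pow_sub hp s
  obtain ⟨b, hb⟩ := dvd_sub_pow_of_dvd_sub (natCast_dvd_one_sub_X_pow_sub hp s) 1
  rw [pow_one, ← pow_mul, ← pow_succ] at hb
  -- Times `1 - X` the claim reads `(1 - X)^m - (1 - X^m) + p(1 - X)^q - p(1 - X)^(2q) G ≡ 0`
  -- modulo `p²`, which follows from `hb`, `hG` and `ha`; then cancel `1 - X`.
  obtain ⟨H, hH⟩ : ((p ^ 2 : ℕ) : ℤ[X]) ∣ (1 - X) ^ (p ^ (s + 1) - 1)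
      - ∑ i ∈ range (p ^ (s + 1)), (X : ℤ[X]) ^ i + (p : ℤ[X]) * (1 - X) ^ (q - 1)
      - (p : ℤ[X]) * (1 - X) ^ (2 * q - 1) * G := by
    refine natCast_dvd_of_dvd_one_sub_X_pow_mul (k := 1)
      ⟨b + a - a * G * ((1 - X) ^ q + 1 - X ^ q), ?_⟩
    push_cast
    linear_combination mul_pow_sub_one (pow_ne_zero (s + 1) hp.ne_zero) (1 - X : ℤ[X])
      - mul_neg_geom_sum (X : ℤ[X]) (p ^ (s + 1)) + p * mul_pow_sub_one hq (1 - X : ℤ[X])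
      - p * G * mul_pow_sub_one (by omega : 2 * q ≠ 0) (1 - X : ℤ[X]) + hb + hG
      + ((p : ℤ[X]) - p * G * ((1 - X) ^ q + 1 - X ^ q)) * ha
  exact ⟨G, H, by push_cast at hH; linear_combination hH⟩

end Polynomial

theorem Ideal.mul_pow_sub_neg_pow_mul_mem {R : Type*} [CommRing R] {K : Ideal R} {c t u : R}
    (hu : ∀ k ∈ K, u * k ∈ span {c} * K) (ht : t * (u + c) ∈ span {c ^ 2} * K) (j : ℕ) :
    t * u ^ j - (-c) ^ j * t ∈ span {c ^ (j + 1)} * K := by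
  induction j with
  | zero => simp
  | succ j ih =>
    obtain ⟨k, hk, hck⟩ := mem_span_singleton_mul.mp ih
    obtain ⟨k', hk', hck'⟩ := mem_span_singleton_mul.mp (hu k hk)
    obtain ⟨l, hl, hcl⟩ := mem_span_singleton_mul.mp ht
    refine mem_span_singleton_mul.mpr
      ⟨k' + (-1) ^ j * l, K.add_mem hk' (K.mul_mem_left _ hl), ?_⟩
    linear_combination u * hck + c ^ (j + 1) * hck' + (-c) ^ j * hcl

theorem exists_one_sub_pow_pred_eq {R : Type*} [CommRing R] {p : ℕ} (hp : p.Prime) (s : ℕ)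
    (x : R) :
    ∃ G H : R, (1 - x) ^ (p ^ (s + 1) - 1) = ∑ i ∈ range (p ^ (s + 1)), x ^ i
      - (p : R) * (1 - x) ^ (p ^ s - 1) + (p : R) * (1 - x) ^ (2 * p ^ s - 1) * G
      + (p : R) ^ 2 * H := by
  obtain ⟨G, H, h⟩ := Polynomial.exists_one_sub_X_pow_pred_eq hp s
  refine ⟨Polynomial.aeval x G, Polynomial.aeval x H, ?_⟩
  simpa using congrArg (Polynomial.aeval x) h

section PrimePowerRootOfUnity

open Ideal

variable {R : Type*} [CommRing R] {p : ℕ} {s : ℕ} {x : R}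

theorem one_sub_pow_mem (hp : p.Prime) (hx : x ^ p ^ (s + 1) = 1) :
    (1 - x) ^ p ^ (s + 1) ∈ span {(p : R)} * span {(1 - x) ^ p ^ s, (p : R)} := by
  obtain ⟨G, H, h⟩ := exists_one_sub_pow_pred_eq hp s x
  have hq : p ^ s ≠ 0 := pow_ne_zero _ hp.ne_zero
  refine mem_span_singleton_mul.mpr
    ⟨(1 - x) ^ p ^ s * ((1 - x) ^ p ^ s * G - 1) + p * ((1 - x) * H),
      mem_span_pair.mpr ⟨(1 - x) ^ p ^ s * G - 1, (1 - x) * H, by ring⟩, ?_⟩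
  linear_combination -(1 - x) * h + mul_pow_sub_one (pow_ne_zero (s + 1) hp.ne_zero) (1 - x)
    - mul_neg_geom_sum x (p ^ (s + 1)) + hx + p * mul_pow_sub_one hq (1 - x)
    - p * G * mul_pow_sub_one (by omega : 2 * p ^ s ≠ 0) (1 - x)

theorem one_sub_pow_sub_mem (hp : p.Prime) :
    (1 - x) ^ (p ^ (s + 1) - p ^ s) ∈ span {(1 - x) ^ p ^ s, (p : R)} := by
  have hqm : 2 * p ^ s ≤ p ^ (s + 1) := pow_succ' p s ▸ Nat.mul_le_mul_right _ hp.two_le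
  refine mem_span_pair.mpr ⟨(1 - x) ^ (p ^ (s + 1) - 2 * p ^ s), 0, ?_⟩
  rw [zero_mul, add_zero, ← pow_add]
  congr 1
  omega

theorem one_sub_pow_sub_mul_mem (hp : p.Prime) (hx : x ^ p ^ (s + 1) = 1) :
    ∀ k ∈ span {(1 - x) ^ p ^ s, (p : R)},
      (1 - x) ^ (p ^ (s + 1) - p ^ s) * k ∈ span {(p : R)} * span {(1 - x) ^ p ^ s, (p : R)} := by
  intro k hk
  obtain ⟨a, b, rfl⟩ := mem_span_pair.mp hk
  have hym : (1 - x) ^ (p ^ (s + 1) - p ^ s) * (1 - x) ^ p ^ s = (1 - x) ^ p ^ (s + 1) := by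
    rw [← pow_add, Nat.sub_add_cancel (Nat.pow_le_pow_right hp.pos s.le_succ)]
  rw [mul_add, mul_left_comm, hym, mul_left_comm, mul_comm _ (p : R)]
  exact add_mem (mul_mem_left _ _ (one_sub_pow_mem hp hx))
    (mul_mem_left _ _ (mul_mem_mul (mem_span_singleton_self _) (one_sub_pow_sub_mem hp)))

theorem one_sub_pow_pred_mul_add_mem (hp : p.Prime) (hx : x ^ p ^ (s + 1) = 1) :
    (1 - x) ^ (p ^ (s + 1) - 1) * ((1 - x) ^ (p ^ (s + 1) - p ^ s) + p) ∈
      span {(p : R) ^ 2} * span {(1 - x) ^ p ^ s, (p : R)} := by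
  obtain ⟨G, H, h⟩ := exists_one_sub_pow_pred_eq hp s x
  obtain ⟨w, hw, hpw⟩ := mem_span_singleton_mul.mp (one_sub_pow_mem hp hx)
  have hq : 1 ≤ p ^ s := Nat.one_le_pow _ _ hp.pos
  have hqm : 2 * p ^ s ≤ p ^ (s + 1) := pow_succ' p s ▸ Nat.mul_le_mul_right _ hp.two_le
  have hu := one_sub_pow_sub_mem (x := x) (s := s) hp
  set u := (1 - x) ^ (p ^ (s + 1) - p ^ s) with hu_def
  have hNu : (∑ i ∈ range (p ^ (s + 1)), x ^ i) * u = 0 := by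
    rw [hu_def, ← mul_pow_sub_one (by omega : p ^ (s + 1) - p ^ s ≠ 0), ← mul_assoc,
      mul_comm _ (1 - x), mul_neg_geom_sum, hx, sub_self, zero_mul]
  have hYu : (1 - x) ^ (p ^ s - 1) * u = (1 - x) ^ (p ^ (s + 1) - 1) := by
    rw [hu_def, ← pow_add]; congr 1; omega
  have hZu : (1 - x) ^ (2 * p ^ s - 1) * u = (1 - x) ^ p ^ (s + 1) * (1 - x) ^ (p ^ s - 1) := by
    rw [hu_def, ← pow_add, ← pow_add]; congr 1; omega
  refine mem_span_singleton_mul.mpr ⟨w * (1 - x) ^ (p ^ s - 1) * G + H * u,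
    add_mem (mul_mem_right _ _ (mul_mem_right _ _ hw)) (mul_mem_left _ _ hu), ?_⟩
  linear_combination -u * h - hNu + p * hYu - p * G * hZu + p * G * (1 - x) ^ (p ^ s - 1) * hpw

theorem natCast_pow_dvd_one_sub_pow_sub (hp : p.Prime) (hx : x ^ p ^ (s + 1) = 1) (j : ℕ) :
    (p : R) ^ (j + 1) ∣ (1 - x) ^ (p ^ (s + 1) - 1 + j * (p ^ (s + 1) - p ^ s))
      - (-(p : R)) ^ j * ∑ i ∈ range (p ^ (s + 1)), x ^ i := by
  have hE := mul_pow_sub_neg_pow_mul_mem (one_sub_pow_sub_mul_mem hp hx)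
    (one_sub_pow_pred_mul_add_mem hp hx) j
  obtain ⟨e, he⟩ := mem_span_singleton.mp (mul_le_left hE)
  obtain ⟨G, H, h⟩ := exists_one_sub_pow_pred_eq hp s x
  refine ⟨e + (-1) ^ j * (-(1 - x) ^ (p ^ s - 1) + (1 - x) ^ (2 * p ^ s - 1) * G + p * H), ?_⟩
  rw [pow_add, pow_mul]
  linear_combination he + (-(p : R)) ^ j * h

end PrimePowerRootOfUnity

namespace AddMonoidAlgebra

theorem coeff_intCast_mul {M : Type*} [AddMonoid M] (n : ℤ) (a : AddMonoidAlgebra ℤ M) (m : M) :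
    ((n : AddMonoidAlgebra ℤ M) * a).coeff m = n * a.coeff m := by
  rw [← zsmul_eq_mul, coeff_smul_apply, smul_eq_mul]

theorem intCast_dvd_coeff {M : Type*} [AddMonoid M] {n : ℤ} {a : AddMonoidAlgebra ℤ M}
    (h : (n : AddMonoidAlgebra ℤ M) ∣ a) (m : M) : n ∣ a.coeff m := by
  obtain ⟨b, rfl⟩ := h
  exact ⟨b.coeff m, coeff_intCast_mul n b m⟩

theorem single_one_pow (m k : ℕ) :
    single (1 : ZMod m) (1 : ℤ) ^ k = single (k : ZMod m) 1 := by
  rw [single_pow, nsmul_one, one_pow]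

theorem single_one_pow_self (m : ℕ) : single (1 : ZMod m) (1 : ℤ) ^ m = 1 := by
  rw [single_one_pow, ZMod.natCast_self, one_def]

theorem coeff_sum_range_single_one_pow {m : ℕ} (hm : 0 < m) (δ : ℕ) :
    (∑ i ∈ range m, single (1 : ZMod m) (1 : ℤ) ^ i).coeff (δ : ZMod m) = 1 := by
  simp only [single_one_pow, coeff_sum, Finsupp.finsetSum_apply, coeff_single,
    Finsupp.single_apply, ZMod.natCast_eq_natCast_iff']
  rw [sum_congr rfl fun i hi => by rw [Nat.mod_eq_of_lt (mem_range.mp hi)], sum_ite_eq',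
    if_pos (mem_range.mpr (Nat.mod_lt δ hm))]

end AddMonoidAlgebra

open AddMonoidAlgebra in
theorem cHat_eq_coeff (p α δ : ℕ) :
    cHat p α δ = ((1 - single (1 : ZMod (p ^ α)) (1 : ℤ)) ^ δ).coeff δ := by
  have hexp : (1 - single (1 : ZMod (p ^ α)) (1 : ℤ)) ^ δ = ∑ i ∈ range (δ + 1),
      (((-1) ^ i * δ.choose i : ℤ) : AddMonoidAlgebra ℤ (ZMod (p ^ α))) * single 1 1 ^ i := by
    rw [sub_eq_neg_add, add_pow]
    refine sum_congr rfl fun i _ => ?_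
    push_cast
    ring
  simp only [hexp, coeff_sum, Finsupp.finsetSum_apply, coeff_intCast_mul, single_one_pow,
    coeff_single, Finsupp.single_apply, ZMod.natCast_eq_natCast_iff', cHat]
  refine sum_congr rfl fun i _ => ?_
  split_ifs <;> simp

open AddMonoidAlgebra in
theorem pow_succ_dvd_cHat_sub {p : ℕ} (hp : p.Prime) (s j : ℕ) :
    (p : ℤ) ^ (j + 1) ∣
      cHat p (s + 1) (p ^ (s + 1) - 1 + j * (p ^ (s + 1) - p ^ s)) - (-(p : ℤ)) ^ j := by
  set δ := p ^ (s + 1) - 1 + j * (p ^ (s + 1) - p ^ s)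
  have key := natCast_pow_dvd_one_sub_pow_sub hp (single_one_pow_self (p ^ (s + 1))) j
  rw [← Int.cast_natCast (R := AddMonoidAlgebra ℤ (ZMod (p ^ (s + 1)))) p, ← Int.cast_neg,
    ← Int.cast_pow, ← Int.cast_pow] at key
  have hcoeff := intCast_dvd_coeff key (δ : ZMod (p ^ (s + 1)))
  rwa [coeff_sub, Finsupp.sub_apply, coeff_intCast_mul,
    coeff_sum_range_single_one_pow (pow_pos hp.pos _), mul_one, ← cHat_eq_coeff] at hcoeff

theorem not_pow_succ_dvd_of_pow_succ_dvd_sub {R : Type*} [CommRing R] [IsDomain R] {π c : R}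
    (hπ : Prime π) {j : ℕ} (h : π ^ (j + 1) ∣ c - (-π) ^ j) : ¬ π ^ (j + 1) ∣ c := by
  intro hc
  have h' := dvd_sub hc h
  rw [sub_sub_cancel, neg_pow, (isUnit_neg_one.pow j).dvd_mul_left,
    pow_dvd_pow_iff hπ.ne_zero hπ.not_isUnit] at h'
  omega

theorem cHat_not_div_at_critical_degree (p : ℕ) (hp : p.Prime) (α β : ℕ)
    (hα : 1 ≤ α) (hβ : 1 ≤ β) :
    ¬ (p : ℤ) ^ β ∣ cHat p α (β * p ^ α - (β - 1) * p ^ (α - 1) - 1) := by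
  obtain ⟨s, rfl⟩ : ∃ s, α = s + 1 := ⟨α - 1, by omega⟩
  obtain ⟨j, rfl⟩ : ∃ j, β = j + 1 := ⟨β - 1, by omega⟩
  have hδ : (j + 1) * p ^ (s + 1) - (j + 1 - 1) * p ^ (s + 1 - 1) - 1
      = p ^ (s + 1) - 1 + j * (p ^ (s + 1) - p ^ s) := by
    have := Nat.mul_le_mul_left j (Nat.pow_le_pow_right hp.pos (by omega : s ≤ s + 1))
    have := Nat.one_le_pow (s + 1) p hp.pos
    simp only [Nat.add_sub_cancel, Nat.mul_sub, add_one_mul]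
    omega
  rw [hδ]
  exact not_pow_succ_dvd_of_pow_succ_dvd_sub (Nat.prime_iff_prime_int.mp hp)
    (pow_succ_dvd_cHat_sub hp s j)
end

section
/- Let p be a prime and α, β ≥ 1. The characteristic function χ : ℤ/p^αℤ → ℤ/p^βℤ with χ(0) = 1 and χ(x) = 0 for x ≠ 0 has functional degree exactly β·p^α - (β-1)·p^{α-1} - 1. -/
/-!
Functions `ℤ/p^α → R` are identified with the group ring `R[ℤ/p^α]` through their coefficients;
then `Δ` is multiplication by `x = τ - 1`, with `τ` the basis element of `-1`, and `χ` is `1`. So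
the functional degree of `χ` is one less than the nilpotency index of `x` in `(ℤ/p^β)[ℤ/p^α]`,
which is `βφ + q` for `q = p^(α-1)` and `φ = p^α - q`.

Let `Θ = ∑_{i<p} τ^(qi) = Φ_{p^α}(τ)`. Since `Φ_{p^α} ≡ (X - 1)^φ` modulo `p`, `x^φ = Θ + p u`,
and `Θ² = pΘ` because `Θ (τ^q - 1) = 0`. As `p^β = 0`, the binomial expansion collapses to
`x^(βφ) = p^(β-1) Θ g`, and multiplying by `x^q ≡ τ^q - 1` (mod `p`) gives `0`. For the lower bound,
`x^(βφ+q-1) = p^(β-1) Θ g x^(q-1)`, so it suffices that `Θ g x^(q-1)` is nonzero modulo `p`. In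
`𝔽_p[ℤ/p^α]` it is `x^(p^α-1) g`; since `x^(p^α) = 0` there and `g ≡ ±1` modulo `x`, it equals
`±x^(p^α-1)`, whose coefficient at `0` is `±1`.
-/

/-- The discrete difference operator: `(dOp g f) x = f (x + g) - f x`. -/
def dOp {A B : Type*} [AddCommGroup A] [AddCommGroup B] (g : A) (f : A → B) : A → B :=
  fun x => f (x + g) - f x

open Polynomial Finset

section DifferenceOperator

variable {G R : Type*} [AddCommGroup G] [CommRing R]

lemma dOp_coeff (g : G) (a : AddMonoidAlgebra R G) :
    dOp g ⇑a.coeff = ⇑((AddMonoidAlgebra.single (-g) (1 : R) - 1) * a).coeff := by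
  funext x
  simp [dOp, sub_mul, AddMonoidAlgebra.coeff_sub, add_comm]

lemma iterate_dOp_coeff (g : G) (a : AddMonoidAlgebra R G) (m : ℕ) :
    (dOp g)^[m] ⇑a.coeff = ⇑((AddMonoidAlgebra.single (-g) (1 : R) - 1) ^ m * a).coeff := by
  induction m with
  | zero => simp
  | succ m ih => rw [Function.iterate_succ_apply', ih, dOp_coeff, ← mul_assoc, ← pow_succ']

lemma iterate_dOp_indicator_eq_zero_iff [DecidableEq G] (g : G) (m : ℕ) :
    (dOp g)^[m] (fun x : G => if x = 0 then (1 : R) else 0) = 0 ↔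
      (AddMonoidAlgebra.single (-g) (1 : R) - 1) ^ m = 0 := by
  have hχ : (fun x : G => if x = 0 then (1 : R) else 0) = ⇑(1 : AddMonoidAlgebra R G).coeff := by
    funext x
    simp [AddMonoidAlgebra.one_def, Finsupp.single_apply, eq_comm]
  rw [hχ, iterate_dOp_coeff, mul_one, ← AddMonoidAlgebra.coeff_inj, AddMonoidAlgebra.coeff_zero,
    Finsupp.coe_eq_zero]

end DifferenceOperator

lemma isLeast_pow_succ_eq_zero {M : Type*} [MonoidWithZero M] {x : M} {k : ℕ}
    (h : x ^ (k + 1) = 0) (h' : x ^ k ≠ 0) : IsLeast {m : ℕ | x ^ (m + 1) = 0} k :=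
  ⟨h, fun _ hm => not_lt.mp fun hlt => h' (pow_eq_zero_of_le hlt hm)⟩

lemma Polynomial.natCast_dvd_sub_of_map_eq {n : ℕ} {f g : ℤ[X]}
    (h : f.map (Int.castRingHom (ZMod n)) = g.map (Int.castRingHom (ZMod n))) :
    (n : ℤ[X]) ∣ f - g := by
  rw [← C_eq_natCast, C_dvd_iff_dvd_coeff]
  intro i
  rw [← ZMod.intCast_zmod_eq_zero_iff_dvd, coeff_sub, Int.cast_sub, sub_eq_zero]
  simpa using congr_arg (coeff · i) h

lemma mul_geom_sum_of_mul_sub_one_eq_zero {A : Type*} [CommRing A] {a s : A}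
    (h : a * (s - 1) = 0) (m : ℕ) : a * ∑ i ∈ range m, s ^ i = m * a := by
  have hs : ∀ i : ℕ, a * s ^ i = a := by
    intro i
    induction i with
    | zero => rw [pow_zero, mul_one]
    | succ i ih => linear_combination ih + s ^ i * h
  simp [mul_sum, hs]

lemma add_natCast_mul_pow_succ {A : Type*} [CommRing A] {p : ℕ} {e : A} (he : e * e = p * e)
    (u : A) (k : ℕ) :
    (e + p * u) ^ (k + 1) =
      p ^ k * e * ((1 + u) ^ (k + 1) - u ^ (k + 1)) + p ^ (k + 1) * u ^ (k + 1) := by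
  induction k with
  | zero => ring
  | succ k ih =>
    rw [pow_succ, ih]
    linear_combination (p : A) ^ k * ((1 + u) ^ (k + 1) - u ^ (k + 1)) * he

lemma pow_mul_eq_mul_pow_of_dvd_sub {A : Type*} [CommRing A] {y a c : A} {M : ℕ}
    (hy : y ^ (M + 1) = 0) (hdvd : y ∣ a - c) : y ^ M * a = c * y ^ M := by
  obtain ⟨w, hw⟩ := hdvd
  linear_combination y ^ M * hw + w * hy

lemma geom_sum_mul_pow_sub_one {A : Type*} [CommRing A] {p n : ℕ} {τ : A}
    (hτ : τ ^ p ^ (n + 1) = 1) : (∑ i ∈ range p, (τ ^ p ^ n) ^ i) * (τ ^ p ^ n - 1) = 0 := by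
  rw [geom_sum_mul, ← pow_mul, ← pow_succ, hτ, sub_self]

section RootOfUnity

variable {A : Type*} [CommRing A] (p : ℕ) [Fact p.Prime] (n : ℕ)

lemma exists_sub_one_pow_prime_pow_eq (τ : A) :
    ∃ c : A, (τ - 1) ^ p ^ n = τ ^ p ^ n - 1 + p * c := by
  obtain ⟨g, hg⟩ := natCast_dvd_sub_of_map_eq (n := p)
    (f := (X - 1) ^ p ^ n) (g := X ^ p ^ n - 1) (by simp [sub_pow_char_pow])
  refine ⟨aeval τ g, ?_⟩
  rw [← sub_eq_iff_eq_add']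
  simpa using congr_arg (aeval τ) hg

/-- Lifted from `Φ_{p^(n+1)} = (X - 1) ^ (p^(n+1) - p^n)` in `𝔽_p[X]`; evaluating at `X = 1`, where
`Φ_{p^(n+1)}(1) = p`, shows that the error term is `≡ -1` modulo `τ - 1`. -/
lemma exists_sub_one_pow_eq_geom_sum_add (τ : A) :
    ∃ u : A, (τ - 1) ^ (p ^ (n + 1) - p ^ n) = ∑ i ∈ range p, (τ ^ p ^ n) ^ i + p * u ∧
      τ - 1 ∣ u + 1 := by
  have hp := (Fact.out : p.Prime)
  obtain ⟨U, hU⟩ := natCast_dvd_sub_of_map_eq (n := p)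
    (f := (X - 1) ^ (p ^ (n + 1) - p ^ n)) (g := cyclotomic (p ^ (n + 1)) ℤ) (by
      have := cyclotomic_mul_prime_pow_eq (ZMod p) (m := 1) hp.not_dvd_one n.succ_pos
      simp_all)
  have hU1 : U.eval 1 = -1 := by
    have := congr_arg (eval 1) hU
    simp only [eval_sub, eval_pow, eval_X, eval_one, sub_self,
      zero_pow (Nat.sub_ne_zero_of_lt (Nat.pow_lt_pow_right hp.one_lt n.lt_succ_self)),
      eval_one_cyclotomic_prime_pow, eval_mul, eval_natCast, zero_sub] at this
    exact mul_left_cancel₀ (Int.natCast_ne_zero.mpr hp.ne_zero) (by linarith)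
  have hdvd : X - C 1 ∣ U + 1 := by
    rw [dvd_iff_isRoot, IsRoot, eval_add, hU1, eval_one, neg_add_cancel]
  refine ⟨aeval τ U, ?_, by simpa using map_dvd (aeval τ) hdvd⟩
  rw [← sub_eq_iff_eq_add']
  simpa [cyclotomic_prime_pow_eq_geom_sum hp] using congr_arg (aeval τ) hU

lemma geom_sum_eq_sub_one_pow_of_natCast_eq_zero (hp : (p : A) = 0) (τ : A) :
    ∑ i ∈ range p, (τ ^ p ^ n) ^ i = (τ - 1) ^ (p ^ (n + 1) - p ^ n) := by
  obtain ⟨u, hu, -⟩ := exists_sub_one_pow_eq_geom_sum_add p n τ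
  simpa [hp] using hu.symm

variable {p n} {τ : A}

lemma exists_sub_one_pow_eq_natCast_pow_mul_geom_sum_mul (hτ : τ ^ p ^ (n + 1) = 1) {b : ℕ}
    (hpb : (p : A) ^ (b + 1) = 0) :
    ∃ g : A, (τ - 1) ^ ((b + 1) * (p ^ (n + 1) - p ^ n)) =
      p ^ b * (∑ i ∈ range p, (τ ^ p ^ n) ^ i) * g ∧ τ - 1 ∣ g - (-1) ^ b := by
  obtain ⟨u, hu, hdvd⟩ := exists_sub_one_pow_eq_geom_sum_add p n τ
  have hΘ := mul_geom_sum_of_mul_sub_one_eq_zero (geom_sum_mul_pow_sub_one hτ) p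
  refine ⟨(1 + u) ^ (b + 1) - u ^ (b + 1), ?_, hdvd.trans ?_⟩
  · rw [mul_comm, pow_mul, hu, add_natCast_mul_pow_succ hΘ, hpb]
    ring
  · have h1 : u + 1 ∣ (1 + u) ^ (b + 1) := add_comm u 1 ▸ dvd_pow_self _ b.succ_ne_zero
    have h2 : u + 1 ∣ u ^ (b + 1) - (-1) ^ (b + 1) := by
      simpa using sub_dvd_pow_sub_pow u (-1) (b + 1)
    convert dvd_sub h1 h2 using 1
    ring

theorem sub_one_pow_eq_zero_of_pow_eq_one (hτ : τ ^ p ^ (n + 1) = 1) {b : ℕ}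
    (hpb : (p : A) ^ (b + 1) = 0) :
    (τ - 1) ^ ((b + 1) * (p ^ (n + 1) - p ^ n) + p ^ n) = 0 := by
  obtain ⟨g, hg, -⟩ := exists_sub_one_pow_eq_natCast_pow_mul_geom_sum_mul hτ hpb
  obtain ⟨c, hc⟩ := exists_sub_one_pow_prime_pow_eq p n τ
  rw [pow_add, hg, hc]
  linear_combination ((p : A) ^ b * g) * geom_sum_mul_pow_sub_one hτ +
    ((∑ i ∈ range p, (τ ^ p ^ n) ^ i) * g * c) * hpb

end RootOfUnity

lemma ZMod.castHom_eq_zero_of_natCast_pow_mul_eq_zero {p b : ℕ} (hp : p ≠ 0)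
    {c : ZMod (p ^ (b + 1))} (hc : (p : ZMod (p ^ (b + 1))) ^ b * c = 0) :
    ZMod.castHom (dvd_pow_self p b.succ_ne_zero) (ZMod p) c = 0 := by
  have : NeZero (p ^ (b + 1)) := ⟨pow_ne_zero _ hp⟩
  rw [← ZMod.natCast_zmod_val c] at hc ⊢
  rw [← Nat.cast_pow, ← Nat.cast_mul, ZMod.natCast_eq_zero_iff] at hc
  rw [map_natCast, ZMod.natCast_eq_zero_iff]
  exact Nat.dvd_of_mul_dvd_mul_left (pow_pos (Nat.pos_of_ne_zero hp) b) (pow_succ p b ▸ hc)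

namespace AddMonoidAlgebra

variable {R : Type*} [CommRing R]

lemma natCast_eq_zero {M : Type*} [AddMonoid M] {k : ℕ} (hk : (k : R) = 0) :
    (k : AddMonoidAlgebra R M) = 0 := by
  rw [natCast_def, hk, single_zero]

lemma natCast_pow_eq_zero {M : Type*} [AddMonoid M] (p k : ℕ) :
    (p : AddMonoidAlgebra (ZMod (p ^ k)) M) ^ k = 0 := by
  rw [← Nat.cast_pow]
  exact natCast_eq_zero (ZMod.natCast_self _)

lemma single_neg_one_pow (m k : ℕ) :
    (single (-1 : ZMod m) (1 : R)) ^ k = single (-(k : ZMod m)) 1 := by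
  simp [single_pow]

lemma single_neg_one_pow_self (m : ℕ) : (single (-1 : ZMod m) (1 : R)) ^ m = 1 := by
  rw [single_neg_one_pow, ZMod.natCast_self, neg_zero, one_def]

lemma single_neg_one_sub_one_pow_ne_zero [Nontrivial R] {m k : ℕ} (hk : k < m) :
    (single (-1 : ZMod m) (1 : R) - 1) ^ k ≠ 0 := by
  have hexp : (single (-1 : ZMod m) (1 : R) - 1) ^ k =
      ∑ i ∈ range (k + 1), single (-(i : ZMod m)) ((-1 : R) ^ (k - i) * k.choose i) := by
    rw [sub_eq_add_neg, add_pow]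
    refine sum_congr rfl fun i _ => ?_
    rw [single_neg_one_pow, show (-1 : AddMonoidAlgebra R (ZMod m)) = single 0 (-1) by
      rw [single_neg, one_def], single_pow, natCast_def, single_mul_single, single_mul_single]
    simp
  intro h
  have h0 := congr_arg (fun z => z.coeff 0) (hexp.symm.trans h)
  simp only [coeff_sum, coeff_single, Finsupp.coe_finsetSum, Finset.sum_apply,
    Finsupp.single_apply, neg_eq_zero, coeff_zero, Finsupp.coe_zero, Pi.zero_apply] at h0
  rw [sum_eq_single 0 (fun c hc hc0 => ?_) (by simp)] at h0
  · simp only [Nat.cast_zero, ite_true, Nat.sub_zero, Nat.choose_zero_right, Nat.cast_one,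
      mul_one] at h0
    exact ((isUnit_neg_one (α := R)).pow k).ne_zero h0
  · have : (c : ZMod m) ≠ 0 := by
      rw [Ne, ZMod.natCast_eq_zero_iff]
      exact fun hdvd => hc0 (Nat.eq_zero_of_dvd_of_lt hdvd (by rw [mem_range] at hc; omega))
    simp [this]

lemma mapRingHom_castHom_eq_zero_of_natCast_pow_mul_eq_zero {M : Type*} [AddMonoid M]
    {p b : ℕ} (hp : p ≠ 0) {z : AddMonoidAlgebra (ZMod (p ^ (b + 1))) M}
    (hz : (p : AddMonoidAlgebra _ M) ^ b * z = 0) :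
    mapRingHom M (ZMod.castHom (dvd_pow_self p b.succ_ne_zero) (ZMod p)) z = 0 := by
  ext a
  rw [coeff_mapRingHom]
  refine ZMod.castHom_eq_zero_of_natCast_pow_mul_eq_zero hp ?_
  have := congr_arg (fun z => z.coeff a) hz
  rw [← Nat.cast_pow, ← nsmul_eq_mul, coeff_smul, Finsupp.smul_apply, nsmul_eq_mul] at this
  simpa using this

lemma geom_sum_mul_mul_sub_one_pow_ne_zero (p : ℕ) [Fact p.Prime] (n : ℕ)
    {g u : AddMonoidAlgebra (ZMod p) (ZMod (p ^ (n + 1)))} (hu : IsUnit u)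
    (hg : single (-1) 1 - 1 ∣ g - u) :
    (∑ i ∈ range p, (single (-1) 1 ^ p ^ n) ^ i) * g * (single (-1) 1 - 1) ^ (p ^ n - 1) ≠ 0 := by
  have hp := (Fact.out : p.Prime)
  set τ := single (-1 : ZMod (p ^ (n + 1))) (1 : ZMod p)
  have hp0 : (p : AddMonoidAlgebra (ZMod p) (ZMod (p ^ (n + 1)))) = 0 :=
    natCast_eq_zero (ZMod.natCast_self _)
  have hq : 1 ≤ p ^ n := Nat.one_le_pow _ _ hp.pos
  have hφ : p ^ n < p ^ (n + 1) := Nat.pow_lt_pow_right hp.one_lt n.lt_succ_self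
  have hx : (τ - 1) ^ (p ^ (n + 1) - 1 + 1) = 0 := by
    obtain ⟨c, hc⟩ := exists_sub_one_pow_prime_pow_eq p (n + 1) τ
    rw [Nat.sub_add_cancel (hq.trans hφ.le), hc, single_neg_one_pow_self, hp0]
    ring
  intro h
  rw [geom_sum_eq_sub_one_pow_of_natCast_eq_zero p n hp0, mul_right_comm, ← pow_add,
    show p ^ (n + 1) - p ^ n + (p ^ n - 1) = p ^ (n + 1) - 1 by omega,
    pow_mul_eq_mul_pow_of_dvd_sub hx hg] at h
  exact single_neg_one_sub_one_pow_ne_zero (by omega) (hu.mul_right_eq_zero.mp h)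

theorem single_neg_one_sub_one_pow_ne_zero_of_zmod_prime_pow (p : ℕ) [Fact p.Prime] (b n : ℕ) :
    (single (-1 : ZMod (p ^ (n + 1))) (1 : ZMod (p ^ (b + 1))) - 1) ^
      ((b + 1) * (p ^ (n + 1) - p ^ n) + p ^ n - 1) ≠ 0 := by
  have hp := (Fact.out : p.Prime)
  obtain ⟨g, hg, hdvd⟩ := exists_sub_one_pow_eq_natCast_pow_mul_geom_sum_mul
    (single_neg_one_pow_self _) (natCast_pow_eq_zero p (b + 1))
  intro h0
  rw [Nat.add_sub_assoc (Nat.one_le_pow _ _ hp.pos), pow_add _ ((b + 1) * _), hg, mul_assoc,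
    mul_assoc] at h0
  have hπ := mapRingHom_castHom_eq_zero_of_natCast_pow_mul_eq_zero hp.ne_zero h0
  simp only [map_mul, map_sum, map_pow, map_sub, map_one, mapRingHom_single] at hπ
  refine geom_sum_mul_mul_sub_one_pow_ne_zero p n (isUnit_neg_one.pow b) ?_ (by rwa [mul_assoc])
  simpa using map_dvd (mapRingHom _ (ZMod.castHom (dvd_pow_self p b.succ_ne_zero) (ZMod p))) hdvd

end AddMonoidAlgebra

/-- The characteristic (Lagrange) function `χ : ℤ/p^αℤ → ℤ/p^βℤ` of `0` has functional
degree exactly `β p^α - (β-1) p^{α-1} - 1`: this number is the least `m` with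
`Δ^{m+1} χ ≡ 0`. -/
theorem fdeg_characteristic_function (p : ℕ) (hp : p.Prime) (α β : ℕ)
    (hα : 1 ≤ α) (hβ : 1 ≤ β) :
    IsLeast {m : ℕ |
        (dOp (1 : ZMod (p ^ α)))^[m + 1]
          (fun x : ZMod (p ^ α) => if x = 0 then (1 : ZMod (p ^ β)) else 0) = 0}
      (β * p ^ α - (β - 1) * p ^ (α - 1) - 1) := by
  have : Fact p.Prime := ⟨hp⟩
  obtain ⟨n, rfl⟩ : ∃ n, α = n + 1 := ⟨α - 1, by omega⟩
  obtain ⟨b, rfl⟩ : ∃ b, β = b + 1 := ⟨β - 1, by omega⟩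
  have hq : 1 ≤ p ^ n := Nat.one_le_pow _ _ hp.pos
  have hN : (b + 1) * p ^ (n + 1) - (b + 1 - 1) * p ^ (n + 1 - 1) - 1 =
      (b + 1) * (p ^ (n + 1) - p ^ n) + p ^ n - 1 := by
    have hle : b * p ^ n + p ^ n ≤ (b + 1) * p ^ (n + 1) := by
      rw [← add_one_mul]
      exact Nat.mul_le_mul_left _ (Nat.pow_le_pow_right hp.pos n.le_succ)
    rw [Nat.add_sub_cancel, Nat.add_sub_cancel, Nat.mul_sub, add_one_mul b (p ^ n)]
    omega
  simp only [iterate_dOp_indicator_eq_zero_iff, hN]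
  refine isLeast_pow_succ_eq_zero ?_
    (AddMonoidAlgebra.single_neg_one_sub_one_pow_ne_zero_of_zmod_prime_pow p b n)
  rw [Nat.sub_add_cancel (by omega)]
  exact sub_one_pow_eq_zero_of_pow_eq_one (AddMonoidAlgebra.single_neg_one_pow_self _)
    (AddMonoidAlgebra.natCast_pow_eq_zero p (b + 1))
end
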